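/- For x, y ∈ A_N^o, if x ≤_3 y then x ≤_2 y, where ≤_2 is the absolute (prefix) order on S_N with respect to transpositions. That is, (A_N^o, ≤_3) is a subposet of (S_N, ≤_2). -/

import Mathlib

/-!
Write `d(σ)` for `N` minus the number of cycles of `σ ∈ S_N`, fixed points included.
A permutation with only odd cycles is a product of `d(σ)/2` three-cycles (peel a 3-cycle off an
odd cycle), while every product of `m` transpositions has `d ≤ m`: multiplying by a transposition
lowers the dimension of the space of invariant functions `Fin N → ℚ` by at most one, and that
dimension is the number of cycles. As a 3-cycle is a product of two transpositions, `ℓ₂ ≤ 2ℓ₃` on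
products of 3-cycles, with equality on `A_N^o`. Hence for `x ≤₃ y`
`ℓ₂ y ≤ ℓ₂ x + ℓ₂ (x⁻¹y) ≤ 2ℓ₃ x + 2ℓ₃ (x⁻¹y) = 2ℓ₃ y = ℓ₂ y`, and the chain collapses.
-/

open Equiv Equiv.Perm

/-- The word length of `x` with respect to a generating set `T`. -/
noncomputable def lenT {G : Type*} [Group G] (T : Set G) (x : G) : ℕ :=
  sInf {n | ∃ l : List G, (∀ t ∈ l, t ∈ T) ∧ l.prod = x ∧ l.length = n}

/-- The `T`-prefix order. -/
def leT {G : Type*} [Group G] (T : Set G) (x y : G) : Prop :=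
  lenT T y = lenT T x + lenT T (x⁻¹ * y)

/-- The set of 3-cycles of the symmetric group on `Fin N`. -/
def threeCycles (N : ℕ) : Set (Perm (Fin N)) := {σ | σ.IsThreeCycle}

/-- The set of transpositions of the symmetric group on `Fin N`. -/
def transpositions (N : ℕ) : Set (Perm (Fin N)) := {σ | σ.IsSwap}

/-- The number of odd cycles of a permutation, counting fixed points. -/
def ocyc {N : ℕ} (x : Perm (Fin N)) : ℕ :=
  (x.cycleType.filter (fun n => Odd n)).card + (N - x.cycleType.sum)

open Finset
open scoped Pointwise

section WordLength

variable {G : Type*} [Group G] {S T : Set G}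

theorem lenT_le_length {l : List G} (hl : ∀ t ∈ l, t ∈ T) : lenT T l.prod ≤ l.length :=
  Nat.sInf_le ⟨l, hl, rfl, rfl⟩

theorem exists_list_length_eq_lenT {x : G} (hx : x ∈ Submonoid.closure T) :
    ∃ l : List G, (∀ t ∈ l, t ∈ T) ∧ l.prod = x ∧ l.length = lenT T x := by
  obtain ⟨l, hl, rfl⟩ := Submonoid.exists_list_of_mem_closure hx
  exact Nat.sInf_mem
    (s := {n | ∃ m : List G, (∀ t ∈ m, t ∈ T) ∧ m.prod = l.prod ∧ m.length = n})
    ⟨l.length, l, hl, rfl, rfl⟩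

theorem lenT_mul_le {x y : G} (hx : x ∈ Submonoid.closure T) (hy : y ∈ Submonoid.closure T) :
    lenT T (x * y) ≤ lenT T x + lenT T y := by
  obtain ⟨l, hl, rfl, hlx⟩ := exists_list_length_eq_lenT hx
  obtain ⟨m, hm, rfl, hmy⟩ := exists_list_length_eq_lenT hy
  rw [← hlx, ← hmy, ← List.length_append, ← List.prod_append]
  exact lenT_le_length fun t ht => (List.mem_append.1 ht).elim (hl t) (hm t)

theorem lenT_list_prod_le {k : ℕ} {l : List G}
    (hl : ∀ t ∈ l, t ∈ Submonoid.closure S ∧ lenT S t ≤ k) : lenT S l.prod ≤ k * l.length := by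
  induction l with
  | nil => exact lenT_le_length (l := []) (by simp)
  | cons t l ih =>
    obtain ⟨⟨ht, htk⟩, hl⟩ := List.forall_mem_cons.1 hl
    calc lenT S (t :: l).prod
        ≤ lenT S t + lenT S l.prod :=
          lenT_mul_le ht (list_prod_mem fun s hs => (hl s hs).1)
      _ ≤ k * (t :: l).length := by
          rw [List.length_cons, mul_add_one, add_comm]
          exact add_le_add (ih hl) htk

theorem lenT_le_mul_lenT {k : ℕ} (hTS : ∀ t ∈ T, t ∈ Submonoid.closure S ∧ lenT S t ≤ k)
    {x : G} (hx : x ∈ Submonoid.closure T) : lenT S x ≤ k * lenT T x := by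
  obtain ⟨l, hl, rfl, hlen⟩ := exists_list_length_eq_lenT hx
  exact hlen ▸ lenT_list_prod_le fun t ht => hTS t (hl t ht)

theorem leT_of_leT_of_mul_lenT_le {k : ℕ}
    (hTS : ∀ t ∈ T, t ∈ Submonoid.closure S ∧ lenT S t ≤ k) {x y : G}
    (hx : x ∈ Submonoid.closure T) (hxy : x⁻¹ * y ∈ Submonoid.closure T)
    (hy : k * lenT T y ≤ lenT S y) (h : leT T x y) : leT S x y := by
  have hTS' : Submonoid.closure T ≤ Submonoid.closure S :=
    Submonoid.closure_le.2 fun t ht => (hTS t ht).1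
  have hsub : lenT S y ≤ lenT S x + lenT S (x⁻¹ * y) := by
    simpa using lenT_mul_le (hTS' hx) (hTS' hxy)
  have hlx := lenT_le_mul_lenT hTS hx
  have hlxy := lenT_le_mul_lenT hTS hxy
  rw [leT] at h ⊢
  rw [h, mul_add] at hy
  omega

end WordLength

namespace Equiv.Perm

variable {α : Type*}

section FixedSubspace

variable (K : Type*) [Field K]

def fixedSubspace (σ : Perm α) : Submodule K (α → K) where
  carrier := {v | ∀ i, v (σ i) = v i}
  add_mem' ha hb i := by simp only [Pi.add_apply, ha i, hb i]
  zero_mem' _ := rfl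
  smul_mem' c v hv i := by simp only [Pi.smul_apply, hv i]

theorem fixedSubspace_one : fixedSubspace K (1 : Perm α) = ⊤ :=
  eq_top_iff.2 fun _ _ _ => rfl

theorem fixedSubspace_inf_le_mul (σ τ : Perm α) :
    fixedSubspace K σ ⊓ fixedSubspace K τ ≤ fixedSubspace K (σ * τ) := by
  rintro v ⟨hσ, hτ⟩ i
  rw [mul_apply, hσ, hτ]

variable {K} in
theorem apply_eq_of_mem_fixedSubspace_of_sameCycle [Finite α] {σ : Perm α} {v : α → K}
    (hv : v ∈ fixedSubspace K σ) {i j : α} (hij : σ.SameCycle i j) : v i = v j := by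
  obtain ⟨n, rfl⟩ := hij.exists_nat_pow_eq
  clear hij
  induction n with
  | zero => rfl
  | succ n ih => rw [ih, pow_succ', mul_apply, hv]

variable [DecidableEq α] [Fintype α]

theorem card_le_finrank_fixedSubspace_swap_add_one {a b : α} (hab : a ≠ b) :
    Fintype.card α ≤ Module.finrank K (fixedSubspace K (swap a b)) + 1 := by
  set φ : (α → K) →ₗ[K] K := LinearMap.proj (R := K) (φ := fun _ : α => K) a - LinearMap.proj b
  have hker : LinearMap.ker φ ≤ fixedSubspace K (swap a b) := by
    intro v hv i
    have hv : v a = v b := sub_eq_zero.1 hv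
    rcases eq_or_ne i a with rfl | hia
    · rw [swap_apply_left, hv]
    rcases eq_or_ne i b with rfl | hib
    · rw [swap_apply_right, hv]
    · rw [swap_apply_of_ne_of_ne hia hib]
  have hrange : Module.finrank K (LinearMap.range φ) ≤ 1 :=
    (Submodule.finrank_le _).trans_eq (Module.finrank_self K)
  have := LinearMap.finrank_range_add_finrank_ker φ
  have := Submodule.finrank_mono hker
  rw [Module.finrank_fintype_fun_eq_card] at *
  omega

theorem card_le_finrank_fixedSubspace_add_length {l : List (Perm α)} (hl : ∀ t ∈ l, t.IsSwap) :
    Fintype.card α ≤ Module.finrank K (fixedSubspace K l.prod) + l.length := by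
  induction l with
  | nil =>
    rw [List.prod_nil, fixedSubspace_one, finrank_top, Module.finrank_fintype_fun_eq_card]
    exact Nat.le_add_right _ _
  | cons t l ih =>
    obtain ⟨⟨a, b, hab, rfl⟩, hl'⟩ := List.forall_mem_cons.1 hl
    have hU := card_le_finrank_fixedSubspace_swap_add_one K hab
    have hW := ih hl'
    have hinf := Submodule.finrank_mono (fixedSubspace_inf_le_mul K (swap a b) l.prod)
    have hsup := Submodule.finrank_le (fixedSubspace K (swap a b) ⊔ fixedSubspace K l.prod)
    have hdim :=
      Submodule.finrank_sup_add_finrank_inf_eq (fixedSubspace K (swap a b)) (fixedSubspace K l.prod)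
    rw [Module.finrank_fintype_fun_eq_card] at hsup
    rw [List.prod_cons, List.length_cons]
    omega

def cycleIndex (σ : Perm α) (i : α) : {i // i ∉ σ.support} ⊕ σ.cycleFactorsFinset :=
  if h : i ∈ σ.support then .inr ⟨σ.cycleOf i, cycleOf_mem_cycleFactorsFinset_iff.2 h⟩
  else .inl ⟨i, h⟩

theorem sameCycle_of_cycleIndex_eq {σ : Perm α} {i j : α}
    (h : cycleIndex σ i = cycleIndex σ j) : σ.SameCycle i j := by
  unfold cycleIndex at h
  split_ifs at h with hi hj hj
  · have hj' : j ∈ (σ.cycleOf i).support := by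
      rw [Subtype.mk.inj (Sum.inr.inj h)]
      exact mem_support_cycleOf_iff.2 ⟨.refl σ j, hj⟩
    exact (mem_support_cycleOf_iff.1 hj').1
  · exact ⟨0, Subtype.mk.inj (Sum.inl.inj h)⟩

theorem finrank_fixedSubspace_le (σ : Perm α) :
    Module.finrank K (fixedSubspace K σ) ≤
      Fintype.card α - #σ.support + #σ.cycleFactorsFinset := by
  have hle : fixedSubspace K σ ≤ LinearMap.range (LinearMap.funLeft K K (cycleIndex σ)) := by
    intro v hv
    refine ⟨fun b => if h : ∃ j, cycleIndex σ j = b then v h.choose else 0, funext fun i => ?_⟩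
    have h : ∃ j, cycleIndex σ j = cycleIndex σ i := ⟨i, rfl⟩
    simp only [LinearMap.funLeft_apply, dif_pos h]
    exact apply_eq_of_mem_fixedSubspace_of_sameCycle hv (sameCycle_of_cycleIndex_eq h.choose_spec)
  calc Module.finrank K (fixedSubspace K σ)
      ≤ Module.finrank K (LinearMap.range (LinearMap.funLeft K K (cycleIndex σ))) :=
        Submodule.finrank_mono hle
    _ ≤ Fintype.card ({i // i ∉ σ.support} ⊕ σ.cycleFactorsFinset) :=
        (LinearMap.finrank_range_le _).trans_eq (Module.finrank_fintype_fun_eq_card K)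
    _ = Fintype.card α - #σ.support + #σ.cycleFactorsFinset := by
        rw [Fintype.card_sum, Fintype.card_subtype_compl, Fintype.card_coe, Fintype.card_coe]

end FixedSubspace

variable [DecidableEq α] [Fintype α]

theorem sum_cycleType_le_card_cycleType_add_lenT (σ : Perm α) :
    σ.cycleType.sum ≤ Multiset.card σ.cycleType + lenT {τ : Perm α | τ.IsSwap} σ := by
  have hσ : σ ∈ Submonoid.closure {τ : Perm α | τ.IsSwap} := by
    rw [mclosure_isSwap]; exact Submonoid.mem_top σ
  obtain ⟨l, hl, rfl, hlen⟩ := exists_list_length_eq_lenT hσ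
  have hlower := card_le_finrank_fixedSubspace_add_length ℚ hl
  have hupper := finrank_fixedSubspace_le ℚ l.prod
  have hsupp := card_le_univ l.prod.support
  rw [sum_cycleType, cycleType_def, Multiset.card_map, ← Finset.card_def]
  omega

theorem IsThreeCycle.lenT_isSwap_le_two {t : Perm α} (ht : t.IsThreeCycle) :
    lenT {σ : Perm α | σ.IsSwap} t ≤ 2 := by
  obtain ⟨a, ha⟩ := ht.isCycle.nonempty_support
  have hta : t a ≠ a := mem_support.1 ha
  calc lenT _ t = lenT _ [swap a (t a), swap (t a) (t (t a))].prod := by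
        rw [List.prod_pair, ← ht.eq_swap_mul_swap_iff_mem_support.2 ha]
    _ ≤ 2 := lenT_le_length <| by
        simpa using ⟨⟨a, t a, hta.symm, rfl⟩, ⟨t a, t (t a), (t.injective.ne hta).symm, rfl⟩⟩

theorem IsCycle.apply_apply_ne_self {f : Perm α} (hf : f.IsCycle) {x : α} (hx : f x ≠ x)
    (h3 : 3 ≤ #f.support) : f (f x) ≠ x := by
  intro h
  rw [hf.eq_swap_of_apply_apply_eq_self hx h, card_support_swap hx.symm] at h3
  omega

theorem card_support_swap_mul_add_one {f : Perm α} {x : α} (hx : f x ≠ x)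
    (hffx : f (f x) ≠ x) : #(swap x (f x) * f).support + 1 = #f.support := by
  rw [support_swap_mul_eq f x hffx, card_sdiff_of_subset (by simpa using hx)]
  have : 0 < #f.support := card_pos.2 ⟨x, mem_support.2 hx⟩
  simp only [card_singleton]
  omega

theorem IsCycle.exists_isThreeCycle_mul {f : Perm α} (hf : f.IsCycle) (h5 : 5 ≤ #f.support) :
    ∃ t g : Perm α, t.IsThreeCycle ∧ g.IsCycle ∧ #g.support + 2 = #f.support ∧ f = t * g := by
  obtain ⟨x, hx, -⟩ := id hf
  have hffx : f (f x) ≠ x := hf.apply_apply_ne_self hx (by omega)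
  have hffx' : f (f x) ≠ f x := f.injective.ne hx
  set g := swap x (f x) * f with hg_def
  have hg : g.IsCycle := hf.swap_mul hx hffx
  have hgcard : #g.support + 1 = #f.support := card_support_swap_mul_add_one hx hffx
  have hgy : g (f x) = f (f x) := swap_apply_of_ne_of_ne hffx hffx'
  have hggy : g (g (f x)) ≠ f x := hg.apply_apply_ne_self (hgy ▸ hffx') (by omega)
  refine ⟨swap x (f x) * swap (f x) (f (f x)), swap (f x) (g (f x)) * g,
    swap_comm (f x) x ▸ isThreeCycle_swap_mul_swap_same hx hffx'.symm hffx.symm,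
    hg.swap_mul (hgy ▸ hffx') hggy, ?_, ?_⟩
  · have := card_support_swap_mul_add_one (hgy ▸ hffx') hggy
    omega
  · rw [hgy, mul_assoc, swap_mul_self_mul, hg_def, swap_mul_self_mul]

theorem IsCycle.exists_isThreeCycle_list {f : Perm α} (hf : f.IsCycle)
    (hodd : Odd #f.support) : ∃ l : List (Perm α), (∀ t ∈ l, t.IsThreeCycle) ∧ l.prod = f ∧
      2 * l.length + 1 = #f.support := by
  induction hn : #f.support using Nat.strong_induction_on generalizing f with
  | _ n ih =>
    obtain h3 | h5 : #f.support = 3 ∨ 5 ≤ #f.support := by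
      have := hf.two_le_card_support
      obtain ⟨k, hk⟩ := hodd
      omega
    · exact ⟨[f], by simpa using card_support_eq_three_iff.1 h3, by simp, by simp [h3, ← hn]⟩
    · obtain ⟨t, g, ht, hg, hcard, rfl⟩ := hf.exists_isThreeCycle_mul h5
      have hgodd : Odd #g.support := by
        obtain ⟨k, hk⟩ := hodd
        exact ⟨k - 1, by omega⟩
      obtain ⟨l, hl, rfl, hlen⟩ := ih _ (by omega) hg hgodd rfl
      refine ⟨t :: l, ?_, rfl, by simp only [List.length_cons]; omega⟩
      simpa [ht] using hl

theorem exists_isThreeCycle_list_of_odd_cycleType (f : Perm α)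
    (hodd : ∀ c ∈ f.cycleType, Odd c) :
    ∃ l : List (Perm α), (∀ t ∈ l, t.IsThreeCycle) ∧ l.prod = f ∧
      2 * l.length + Multiset.card f.cycleType = f.cycleType.sum := by
  induction f using cycle_induction_on with
  | base_one => exact ⟨[], by simp, by simp, by simp⟩
  | base_cycles f hf =>
    obtain ⟨l, hl, hprod, hlen⟩ :=
      hf.exists_isThreeCycle_list (hodd _ (by simp [hf.cycleType]))
    exact ⟨l, hl, hprod, by rw [card_cycleType_eq_one.2 hf, sum_cycleType, ← hlen]⟩
  | induction_disjoint f g hfg _ ihf ihg =>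
    rw [hfg.cycleType_mul] at hodd ⊢
    obtain ⟨l, hl, rfl, hlen⟩ := ihf fun c hc => hodd c (Multiset.mem_add.2 (.inl hc))
    obtain ⟨m, hm, rfl, hmlen⟩ := ihg fun c hc => hodd c (Multiset.mem_add.2 (.inr hc))
    refine ⟨l ++ m, fun t ht => (List.mem_append.1 ht).elim (hl t) (hm t), List.prod_append, ?_⟩
    simp only [List.length_append, Multiset.card_add, Multiset.sum_add]
    omega

theorem inv_setOf_isThreeCycle : {σ : Perm α | σ.IsThreeCycle}⁻¹ = {σ | σ.IsThreeCycle} :=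
  Set.ext fun _ => IsThreeCycle.inv_iff

theorem mem_closure_isThreeCycle_of_odd_cycleType {f : Perm α}
    (hodd : ∀ c ∈ f.cycleType, Odd c) : f ∈ Submonoid.closure {σ : Perm α | σ.IsThreeCycle} := by
  obtain ⟨l, hl, rfl, -⟩ := exists_isThreeCycle_list_of_odd_cycleType f hodd
  exact list_prod_mem fun t ht => Submonoid.subset_closure (hl t ht)

theorem two_mul_lenT_isThreeCycle_le_lenT_isSwap {f : Perm α}
    (hodd : ∀ c ∈ f.cycleType, Odd c) :
    2 * lenT {σ : Perm α | σ.IsThreeCycle} f ≤ lenT {σ : Perm α | σ.IsSwap} f := by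
  obtain ⟨l, hl, rfl, hlen⟩ := exists_isThreeCycle_list_of_odd_cycleType f hodd
  have hupper := lenT_le_length (T := {σ : Perm α | σ.IsThreeCycle}) hl
  have hlower := sum_cycleType_le_card_cycleType_add_lenT l.prod
  omega

end Equiv.Perm

theorem stmt7_general (N : ℕ) (x y : Perm (Fin N))
    (hxo : ∀ c ∈ x.cycleType, Odd c) (hyo : ∀ c ∈ y.cycleType, Odd c)
    (h : leT (threeCycles N) x y) : leT (transpositions N) x y := by
  have hx := mem_closure_isThreeCycle_of_odd_cycleType hxo
  have hxy : x⁻¹ * y ∈ Submonoid.closure (threeCycles N) :=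
    mul_mem (by rwa [← Submonoid.mem_closure_inv, threeCycles, inv_setOf_isThreeCycle])
      (mem_closure_isThreeCycle_of_odd_cycleType hyo)
  exact leT_of_leT_of_mul_lenT_le
    (fun t ht => ⟨by simp [mclosure_isSwap], IsThreeCycle.lenT_isSwap_le_two ht⟩)
    hx hxy (two_mul_lenT_isThreeCycle_le_lenT_isSwap hyo) h

theorem stmt7 (N : ℕ) (x y : Perm (Fin N))
    (hx : x ∈ alternatingGroup (Fin N)) (hy : y ∈ alternatingGroup (Fin N))
    (hxo : ∀ c ∈ x.cycleType, Odd c) (hyo : ∀ c ∈ y.cycleType, Odd c)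
    (h : leT (threeCycles N) x y) : leT (transpositions N) x y :=
  stmt7_general N x y hxo hyo h
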